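/- arXiv:2308.05277 — 4 statements merged into one kernel-verified Lean document; each statement's English description precedes it below -/
import Mathlib

section
/- Let H be a graph with a partition of V(H) into classes ρ₁, ρ₂, ρ₃ whose only monochromatic edge is xy with x, y ∈ ρ₁, and suppose some connected component of H − ρ₁ contains both a vertex of an odd cycle of H − ρ₃ and a vertex of an odd cycle of H − ρ₂. Then H contains a K_4 minor. -/
open SimpleGraph

def HasK4Minor {V : Type*} (G : SimpleGraph V) : Prop :=
  ∃ H : Fin 4 → G.Subgraph,
    (∀ i, (H i).verts.Nonempty) ∧
    (∀ i, (H i).Connected) ∧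
    (∀ i j, i ≠ j → Disjoint (H i).verts (H j).verts) ∧
    (∀ i j, i ≠ j → ∃ a ∈ (H i).verts, ∃ b ∈ (H j).verts, G.Adj a b)

/-!
Along a closed walk avoiding colour `2` (resp. `1`), every edge other than `xy` joins colour `0` to
a non-zero colour, so an odd cycle avoiding that colour must use `xy`. Hence `x ≠ y` lie on both
odd cycles `C2` and `C3`, and every common vertex of `C2` and `C3` has colour `0`.

Let `K` be the set of vertices reachable from `b` without meeting `C2`; it is connected and
disjoint from `C2`. Leaving `b` along `C3` in both directions, towards `x` and towards `y`, one
first meets `C2` in two distinct vertices of colour `0`, both adjacent to `K`. Following the walk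
from `b` back to `a` inside `H - ρ₁`, one first meets `C2` in a vertex of non-zero colour, again
adjacent to `K`. A connected set outside a cycle that is adjacent to three of its vertices gives a
`K₄` minor: its branch sets are `K` and the three arcs between those vertices.
-/

namespace SimpleGraph

variable {V : Type*} {G : SimpleGraph V}

def reachSetAvoiding (G : SimpleGraph V) (S : Set V) (u : V) : Set V :=
  {v | ∃ p : G.Walk u v, ∀ x ∈ p.support, x ∉ S}

theorem notMem_of_mem_reachSetAvoiding {S : Set V} {u v : V}
    (hv : v ∈ G.reachSetAvoiding S u) : v ∉ S :=
  let ⟨p, hp⟩ := hv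
  hp v p.end_mem_support

theorem connected_induce_reachSetAvoiding {S : Set V} {u : V} (hu : u ∉ S) :
    (G.induce (G.reachSetAvoiding S u)).Connected := by
  classical
  refine induce_connected_of_patches u ⟨.nil, by simpa using hu⟩ fun {v} ⟨p, hp⟩ ↦ ?_
  refine ⟨{x | x ∈ p.support}, fun x hx ↦ ⟨p.takeUntil x hx, fun y hy ↦ hp y ?_⟩,
    p.start_mem_support, p.end_mem_support, p.connected_induce_support.preconnected _ _⟩
  exact p.support_takeUntil_subset_support hx hy

theorem hasK4Minor_of_induce_connected {A B C D : Set V}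
    (hA : (G.induce A).Connected) (hB : (G.induce B).Connected)
    (hC : (G.induce C).Connected) (hD : (G.induce D).Connected)
    (hAB : Disjoint A B) (hAC : Disjoint A C) (hAD : Disjoint A D)
    (hBC : Disjoint B C) (hBD : Disjoint B D) (hCD : Disjoint C D)
    (hAB' : ∃ a ∈ A, ∃ b ∈ B, G.Adj a b) (hAC' : ∃ a ∈ A, ∃ c ∈ C, G.Adj a c)
    (hAD' : ∃ a ∈ A, ∃ d ∈ D, G.Adj a d) (hBC' : ∃ b ∈ B, ∃ c ∈ C, G.Adj b c)
    (hBD' : ∃ b ∈ B, ∃ d ∈ D, G.Adj b d) (hCD' : ∃ c ∈ C, ∃ d ∈ D, G.Adj c d) :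
    HasK4Minor G := by
  have adj_symm {S T : Set V} :
      (∃ s ∈ S, ∃ t ∈ T, G.Adj s t) → ∃ t ∈ T, ∃ s ∈ S, G.Adj t s :=
    fun ⟨s, hs, t, ht, hst⟩ ↦ ⟨t, ht, s, hs, hst.symm⟩
  have hconn : ∀ i, (G.induce (![A, B, C, D] i)).Connected := by
    intro i; fin_cases i <;> assumption
  refine ⟨fun i ↦ (⊤ : G.Subgraph).induce (![A, B, C, D] i), fun i ↦ ?_,
    fun i ↦ connected_induce_iff.mp (hconn i), fun i j hij ↦ ?_, fun i j hij ↦ ?_⟩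
  · exact (connected_induce_iff.mp (hconn i)).nonempty
  · simp only [Subgraph.induce_verts]
    fin_cases i <;> fin_cases j <;>
      first | exact absurd rfl hij | assumption | exact Disjoint.symm ‹_›
  · simp only [Subgraph.induce_verts]
    fin_cases i <;> fin_cases j <;>
      first | exact absurd rfl hij | assumption | exact adj_symm ‹_›

namespace Walk

theorem even_length_of_forall_mem_edges (f : V → Bool) {u : V} (p : G.Walk u u)
    (hp : ∀ a b, s(a, b) ∈ p.edges → f a ≠ f b) : Even p.length := by
  let G' : SimpleGraph V := fromRel fun a b ↦ f a ≠ f b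
  have hp' : ∀ e ∈ p.edges, e ∈ G'.edgeSet := by
    intro e he
    induction e using Sym2.ind with
    | _ a b => simpa [G', (p.adj_of_mem_edges he).ne] using .inl (hp a b he)
  let c : G'.Coloring Bool := Coloring.mk f fun h ↦ by
    simp only [G', fromRel_adj] at h
    exact h.2.elim id Ne.symm
  rw [← p.length_transfer hp']
  exact (c.even_length_iff_congr _).mpr Iff.rfl

theorem exists_adj_mem_reachSetAvoiding {S : Set V} {u v : V} (w : G.Walk u v) (hu : u ∉ S)
    (hS : ∃ t ∈ w.support, t ∈ S) :
    ∃ z ∈ w.support, z ∈ S ∧ ∃ k ∈ G.reachSetAvoiding S u, G.Adj k z := by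
  induction w with
  | nil =>
    obtain ⟨t, ht, htS⟩ := hS
    rw [support_nil, List.mem_singleton] at ht
    exact absurd (ht ▸ htS) hu
  | @cons u m v h w ih =>
    by_cases hm : m ∈ S
    · exact ⟨m, by simp, hm, u, ⟨nil, by simpa using hu⟩, h⟩
    · obtain ⟨z, hzw, hzS, k, ⟨E, hE⟩, hkz⟩ := ih hm <| by
        obtain ⟨t, ht, htS⟩ := hS
        exact ⟨t, (List.mem_cons.mp ht).resolve_left (by rintro rfl; exact hu htS), htS⟩
      exact ⟨z, by simp [hzw], hzS, k, ⟨cons h E, by simpa [hu] using hE⟩, hkz⟩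

theorem mem_support_dropLast_of_ne {u v t : V} {w : G.Walk u v} (ht : t ∈ w.support)
    (htv : t ≠ v) : t ∈ w.support.dropLast := by
  rw [← dropLast_support_concat w, List.mem_append, List.mem_singleton] at ht
  exact ht.resolve_right htv

theorem start_mem_support_dropLast {u v : V} {w : G.Walk u v} (hw : ¬w.Nil) :
    u ∈ w.support.dropLast :=
  support_dropLast hw ▸ w.dropLast.start_mem_support

theorem support_append_append_dropLast {u v w : V} (W₁ : G.Walk u v) (W₂ : G.Walk v w)
    (W₃ : G.Walk w u) :
    ((W₁.append W₂).append W₃).support.dropLast =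
      W₁.support.dropLast ++ W₂.support.dropLast ++ W₃.support.dropLast := by
  simp [support_append_eq_support_dropLast_append, List.dropLast_append_of_ne_nil]

theorem IsCycle.exists_append_append {c u v w : V} {C : G.Walk c c} (hC : C.IsCycle)
    (hu : u ∈ C.support) (hv : v ∈ C.support) (hw : w ∈ C.support) :
    ∃ s t, (s = v ∧ t = w ∨ s = w ∧ t = v) ∧
      ∃ (W₁ : G.Walk u s) (W₂ : G.Walk s t) (W₃ : G.Walk t u),
        ((W₁.append W₂).append W₃).IsCycle ∧
        ∀ x ∈ ((W₁.append W₂).append W₃).support, x ∈ C.support := by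
  classical
  set R := C.rotate u hu
  have hR : R.IsCycle := hC.rotate hu
  have hRC : ∀ x ∈ R.support, x ∈ C.support := fun x ↦ (mem_support_rotate_iff C u hu).mp
  have hvR : v ∈ R.support := (mem_support_rotate_iff C u hu).mpr hv
  have hsplit := R.take_spec hvR
  set P := R.takeUntil v hvR
  set Q := R.dropUntil v hvR
  have hwPQ : w ∈ P.support ∨ w ∈ Q.support := by
    rw [← mem_support_append_iff, hsplit]
    exact (mem_support_rotate_iff C u hu).mpr hw
  rcases hwPQ with hwP | hwQ
  · refine ⟨w, v, .inr ⟨rfl, rfl⟩, P.takeUntil w hwP, P.dropUntil w hwP, Q, ?_⟩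
    rw [take_spec, hsplit]
    exact ⟨hR, hRC⟩
  · refine ⟨v, w, .inl ⟨rfl, rfl⟩, P, Q.takeUntil w hwQ, Q.dropUntil w hwQ, ?_⟩
    rw [← append_assoc, take_spec, hsplit]
    exact ⟨hR, hRC⟩

theorem IsCycle.hasK4Minor_of_append_append {u v w : V} {W₁ : G.Walk u v} {W₂ : G.Walk v w}
    {W₃ : G.Walk w u} (hC : ((W₁.append W₂).append W₃).IsCycle)
    (huv : u ≠ v) (hvw : v ≠ w) (hwu : w ≠ u) {K : Set V} (hK : (G.induce K).Connected)
    (hKC : ∀ x ∈ ((W₁.append W₂).append W₃).support, x ∉ K)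
    (hKu : ∃ k ∈ K, G.Adj k u) (hKv : ∃ k ∈ K, G.Adj k v) (hKw : ∃ k ∈ K, G.Adj k w) :
    HasK4Minor G := by
  have h₁ : ¬W₁.Nil := not_nil_of_ne huv
  have h₂ : ¬W₂.Nil := not_nil_of_ne hvw
  have h₃ : ¬W₃.Nil := not_nil_of_ne hwu
  have hsupport := support_append_append_dropLast W₁ W₂ W₃
  rw [← support_dropLast h₁, ← support_dropLast h₂, ← support_dropLast h₃] at hsupport
  have hKC' : ∀ x ∈ W₁.dropLast.support ++ W₂.dropLast.support ++ W₃.dropLast.support, x ∉ K :=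
    fun x hx ↦ hKC x (List.mem_of_mem_dropLast (hsupport ▸ hx))
  have hnodup := hsupport ▸ hC.nodup_dropLast_support
  simp only [List.nodup_append, List.mem_append] at hnodup hKC'
  obtain ⟨⟨-, -, h12⟩, -, h3⟩ := hnodup
  have hdisj {a b : V} {p : G.Walk a b} {c d : V} {q : G.Walk c d}
      (h : ∀ x ∈ p.support, ∀ y ∈ q.support, x ≠ y) :
      Disjoint {x | x ∈ p.support} {x | x ∈ q.support} :=
    Set.disjoint_left.mpr fun x hp hq ↦ h x hp x hq rfl
  have hKdisj {a b : V} {p : G.Walk a b} (hp : ∀ x ∈ p.support, x ∉ K) :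
      Disjoint {x | x ∈ p.support} K :=
    Set.disjoint_left.mpr hp
  obtain ⟨ku, hku, hku'⟩ := hKu
  obtain ⟨kv, hkv, hkv'⟩ := hKv
  obtain ⟨kw, hkw, hkw'⟩ := hKw
  have hu₁ : u ∈ W₁.dropLast.support := W₁.dropLast.start_mem_support
  have hv₂ : v ∈ W₂.dropLast.support := W₂.dropLast.start_mem_support
  have hw₃ : w ∈ W₃.dropLast.support := W₃.dropLast.start_mem_support
  refine hasK4Minor_of_induce_connected W₁.dropLast.connected_induce_support
    W₂.dropLast.connected_induce_support W₃.dropLast.connected_induce_support hK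
    (hdisj h12) (hdisj fun x hx ↦ h3 x (.inl hx)) (hKdisj fun x hx ↦ hKC' x (.inl (.inl hx)))
    (hdisj fun x hx ↦ h3 x (.inr hx)) (hKdisj fun x hx ↦ hKC' x (.inl (.inr hx)))
    (hKdisj fun x hx ↦ hKC' x (.inr hx))
    ⟨_, W₁.dropLast.end_mem_support, v, hv₂, adj_penultimate h₁⟩
    ⟨u, hu₁, _, W₃.dropLast.end_mem_support, (adj_penultimate h₃).symm⟩
    ⟨u, hu₁, ku, hku, hku'.symm⟩
    ⟨_, W₂.dropLast.end_mem_support, w, hw₃, adj_penultimate h₂⟩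
    ⟨v, hv₂, kv, hkv, hkv'.symm⟩ ⟨w, hw₃, kw, hkw, hkw'.symm⟩

theorem IsCycle.hasK4Minor {c u v w : V} {C : G.Walk c c} (hC : C.IsCycle) {K : Set V}
    (hK : (G.induce K).Connected) (hKC : ∀ x ∈ C.support, x ∉ K)
    (hu : u ∈ C.support) (hv : v ∈ C.support) (hw : w ∈ C.support)
    (huv : u ≠ v) (huw : u ≠ w) (hvw : v ≠ w)
    (hKu : ∃ k ∈ K, G.Adj k u) (hKv : ∃ k ∈ K, G.Adj k v) (hKw : ∃ k ∈ K, G.Adj k w) :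
    HasK4Minor G := by
  obtain ⟨s, t, hst, W₁, W₂, W₃, hR, hRC⟩ := hC.exists_append_append hu hv hw
  have hKR := fun x hx ↦ hKC x (hRC x hx)
  rcases hst with ⟨rfl, rfl⟩ | ⟨rfl, rfl⟩
  · exact hR.hasK4Minor_of_append_append huv hvw huw.symm hK hKR hKu hKv hKw
  · exact hR.hasK4Minor_of_append_append huw hvw.symm huv.symm hK hKR hKu hKw hKv

theorem IsCycle.exists_adj_reachSetAvoiding {c b x y : V} {C : G.Walk c c} (hC : C.IsCycle)
    {S : Set V} (hb : b ∈ C.support) (hbS : b ∉ S) (hx : x ∈ C.support) (hxS : x ∈ S)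
    (hy : y ∈ C.support) (hyS : y ∈ S) (hxy : x ≠ y) :
    ∃ α β, α ≠ β ∧ α ∈ C.support ∧ α ∈ S ∧ β ∈ C.support ∧ β ∈ S ∧
      (∃ k ∈ G.reachSetAvoiding S b, G.Adj k α) ∧
      (∃ k ∈ G.reachSetAvoiding S b, G.Adj k β) := by
  obtain ⟨s, t, hst, W₁, W₂, W₃, hR, hRC⟩ := hC.exists_append_append hb hx hy
  obtain ⟨hsS, htS, hst⟩ : s ∈ S ∧ t ∈ S ∧ s ≠ t := by
    rcases hst with ⟨rfl, rfl⟩ | ⟨rfl, rfl⟩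
    exacts [⟨hxS, hyS, hxy⟩, ⟨hyS, hxS, hxy.symm⟩]
  obtain ⟨α, hα, hαS, hαK⟩ :=
    W₁.exists_adj_mem_reachSetAvoiding hbS ⟨s, W₁.end_mem_support, hsS⟩
  obtain ⟨β, hβ, hβS, hβK⟩ :=
    W₃.reverse.exists_adj_mem_reachSetAvoiding hbS ⟨t, W₃.reverse.end_mem_support, htS⟩
  rw [support_reverse, List.mem_reverse] at hβ
  refine ⟨α, β, ?_, hRC α (by simp [mem_support_append_iff, hα]), hαS,
    hRC β (by simp [mem_support_append_iff, hβ]), hβS, hαK, hβK⟩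
  have hnodup := hR.nodup_dropLast_support
  rw [support_append_append_dropLast, List.nodup_append] at hnodup
  refine hnodup.2.2 α ?_ β (mem_support_dropLast_of_ne hβ fun h ↦ hbS (h ▸ hβS))
  by_cases has : α = s
  · subst has
    exact List.mem_append_right _ (start_mem_support_dropLast (not_nil_of_ne hst))
  · exact List.mem_append_left _ (mem_support_dropLast_of_ne hα has)

end Walk

end SimpleGraph

theorem mem_edges_of_odd_length {V : Type*} {H : SimpleGraph V} {x y : V} {ρ : V → Fin 3}
    (hmono : ∀ a b, H.Adj a b → ρ a = ρ b → s(a,b) = s(x,y)) {k : Fin 3} (hk : k ≠ 0) {c : V}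
    (C : H.Walk c c) (hodd : Odd C.length) (hC : ∀ v ∈ C.support, ρ v ≠ k) :
    s(x,y) ∈ C.edges := by
  by_contra hxy
  refine Nat.not_even_iff_odd.mpr hodd <|
    C.even_length_of_forall_mem_edges (fun v ↦ decide (ρ v = 0)) fun a b hab ↦ ?_
  have hne : ρ a ≠ ρ b := fun h ↦ hxy (hmono a b (C.adj_of_mem_edges hab) h ▸ hab)
  have ha := hC a (C.fst_mem_support_of_mem_edges hab)
  have hb := hC b (C.snd_mem_support_of_mem_edges hab)
  simp only [ne_eq, decide_eq_decide]
  omega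

theorem stmt12_general {V : Type*} (H : SimpleGraph V) (x y : V)
    (ρ : V → Fin 3)
    (hmono : ∀ a b, H.Adj a b → ρ a = ρ b → s(a,b) = s(x,y))
    (a b : V) (ha : ρ a ≠ 0) (hb : ρ b ≠ 0)
    (hreach : (H.induce {v | ρ v ≠ 0}).Reachable ⟨a, ha⟩ ⟨b, hb⟩)
    (c2 : V) (C2 : H.Walk c2 c2) (hC2 : C2.IsCycle) (hC2odd : Odd C2.length)
    (hC2c : ∀ v ∈ C2.support, ρ v ≠ 2) (haC2 : a ∈ C2.support)
    (c3 : V) (C3 : H.Walk c3 c3) (hC3 : C3.IsCycle) (hC3odd : Odd C3.length)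
    (hC3c : ∀ v ∈ C3.support, ρ v ≠ 1) (hbC3 : b ∈ C3.support) :
    HasK4Minor H := by
  have hxy₂ := mem_edges_of_odd_length hmono (by decide : (2 : Fin 3) ≠ 0) C2 hC2odd hC2c
  have hxy₃ := mem_edges_of_odd_length hmono (by decide : (1 : Fin 3) ≠ 0) C3 hC3odd hC3c
  have hρ₀ : ∀ v ∈ C2.support, v ∈ C3.support → ρ v = 0 := fun v h₂ h₃ ↦ by
    have := hC2c v h₂; have := hC3c v h₃; omega
  set S : Set V := {v | v ∈ C2.support}
  have hbS : b ∉ S := fun h ↦ hb (hρ₀ b h hbC3)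
  obtain ⟨W₀⟩ := hreach
  set W := W₀.map (Embedding.induce {v | ρ v ≠ 0}).toHom
  obtain ⟨p, hpW, hpS, hpK⟩ :=
    W.reverse.exists_adj_mem_reachSetAvoiding hbS ⟨a, W.reverse.end_mem_support, haC2⟩
  have hρp : ρ p ≠ 0 := by
    simp only [W, Walk.support_reverse, List.mem_reverse, Walk.support_map,
      List.mem_map] at hpW
    obtain ⟨⟨v, hv⟩, -, rfl⟩ := hpW
    exact hv
  obtain ⟨α, β, hαβ, hα₃, hα₂, hβ₃, hβ₂, hαK, hβK⟩ :=
    hC3.exists_adj_reachSetAvoiding hbC3 hbS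
    (C3.fst_mem_support_of_mem_edges hxy₃) (C2.fst_mem_support_of_mem_edges hxy₂)
    (C3.snd_mem_support_of_mem_edges hxy₃) (C2.snd_mem_support_of_mem_edges hxy₂)
    (C2.adj_of_mem_edges hxy₂).ne
  exact hC2.hasK4Minor (connected_induce_reachSetAvoiding hbS)
    (fun v hv hvK ↦ notMem_of_mem_reachSetAvoiding hvK hv) hα₂ hβ₂ hpS hαβ
    (fun h ↦ hρp (h ▸ hρ₀ α hα₂ hα₃)) (fun h ↦ hρp (h ▸ hρ₀ β hβ₂ hβ₃)) hαK hβK hpK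

theorem stmt12 {V : Type*} (H : SimpleGraph V) (x y : V) (hxy : H.Adj x y)
    (ρ : V → Fin 3) (hx : ρ x = 0) (hy : ρ y = 0)
    (hmono : ∀ a b, H.Adj a b → ρ a = ρ b → s(a,b) = s(x,y))
    (a b : V) (ha : ρ a ≠ 0) (hb : ρ b ≠ 0)
    (hreach : (H.induce {v | ρ v ≠ 0}).Reachable ⟨a, ha⟩ ⟨b, hb⟩)
    (c2 : V) (C2 : H.Walk c2 c2) (hC2 : C2.IsCycle) (hC2odd : Odd C2.length)
    (hC2c : ∀ v ∈ C2.support, ρ v ≠ 2) (haC2 : a ∈ C2.support)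
    (c3 : V) (C3 : H.Walk c3 c3) (hC3 : C3.IsCycle) (hC3odd : Odd C3.length)
    (hC3c : ∀ v ∈ C3.support, ρ v ≠ 1) (hbC3 : b ∈ C3.support) :
    HasK4Minor H :=
  stmt12_general H x y ρ hmono a b ha hb hreach c2 C2 hC2 hC2odd hC2c haC2 c3 C3 hC3 hC3odd hC3c
    hbC3
end

section
/- Let H be a graph with χ(H) ≥ 4, edge xy, and a proper 3-coloring π of H − xy with classes π₁, π₂, π₃, x, y ∈ π₁. Define ρ from π by swapping colors 2 and 3 on every connected component of H − π₁ that contains no vertex of any odd cycle of H − π₃. Then ρ's only monochromatic edge in H is xy, and some component of H − ρ₁ contains both a vertex of an odd cycle of H − ρ₃ and a vertex of an odd cycle of H − ρ₂. -/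
open SimpleGraph

/-- swap colors 2 and 3 (here encoded as 1 and 2 in `Fin 3`). -/
def swapColor : Fin 3 → Fin 3 := fun c => if c = 1 then 2 else if c = 2 then 1 else c

/-- `v`'s component of `H − π₁` contains a vertex of an odd cycle of `H − π₃`. -/
def TouchesOddCycle {V : Type*} (H : SimpleGraph V) (π : V → Fin 3) (v : V) (hv : π v ≠ 0) : Prop :=
  ∃ (w : V) (hw : π w ≠ 0), (H.induce {u | π u ≠ 0}).Reachable ⟨v, hv⟩ ⟨w, hw⟩ ∧
    ∃ (p : V) (c : H.Walk p p), c.IsCycle ∧ Odd c.length ∧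
      (∀ t ∈ c.support, π t ≠ 2) ∧ w ∈ c.support

open Classical in
/-- the recoloring ρ obtained from π by swapping colors 2,3 on components of `H − π₁`
containing no vertex of an odd cycle of `H − π₃`. -/
noncomputable def rho {V : Type*} (H : SimpleGraph V) (π : V → Fin 3) : V → Fin 3 :=
  fun v => if hv : π v = 0 then 0
    else if TouchesOddCycle H π v hv then π v else swapColor (π v)

/-!
Adjacent vertices of `H − π₁` lie in one component of it, so they are either both swapped or
both kept; hence `ρ` is still a proper colouring of `H − xy`, and its class `ρ₂` is independent
in `H`. As `χ(H) ≥ 4`, the graph `H − ρ₂` is not bipartite and contains an odd cycle `C`, which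
meets `H − π₁`. Some vertex `t` of `C` must lie in a component of `H − π₁` containing a vertex `w`
of an odd cycle `D` of `H − π₃`: otherwise every vertex of `C` outside `π₁` was swapped and `C`
itself is such a cycle. Finally `ρ` agrees with `π` on `D`, and `H − ρ₁ = H − π₁`.
-/

namespace SimpleGraph

variable {V : Type*} {G : SimpleGraph V}

namespace Walk

theorem exists_odd_isCycle_or_even_length_bypass_iff [DecidableEq V] {u v : V}
    (p : G.Walk u v) :
    (∃ (w : V) (c : G.Walk w w), c.IsCycle ∧ Odd c.length ∧ c.support ⊆ p.support) ∨
      (Even p.bypass.length ↔ Even p.length) := by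
  induction p with
  | nil => exact .inr Iff.rfl
  | @cons u w v h p ih =>
    rcases ih with ⟨z, c, hc, hodd, hsub⟩ | hpar
    · exact Or.inl ⟨z, c, hc, hodd, List.Subset.trans hsub (by simp)⟩
    simp only [bypass]
    split_ifs with hu
    · have hlen := congrArg length (p.bypass.take_spec hu)
      rw [length_append] at hlen
      by_cases ht : Even (p.bypass.takeUntil u hu).length
      · have htake := p.bypass_isPath.takeUntil hu
        refine Or.inl ⟨u, cons h (p.bypass.takeUntil u hu), ?_, ?_, ?_⟩
        · refine (cons_isCycle_iff _ h).mpr ⟨htake, fun he => ?_⟩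
          have := htake.length_eq_one_of_mem_edges (Sym2.eq_swap ▸ he)
          rw [this] at ht
          exact Nat.not_even_one ht
        · simpa [length_cons] using ht.add_one
        · rw [support_cons, support_cons]
          exact List.cons_subset_cons _
            (List.Subset.trans (p.bypass.support_takeUntil_subset_support hu)
              p.support_bypass_subset_support)
      · right
        simp only [Nat.even_iff, length_cons] at hpar ht ⊢
        omega
    · right
      simp only [Nat.even_iff, length_cons] at hpar ⊢
      omega

theorem exists_odd_isCycle_of_odd_length {u : V} (p : G.Walk u u) (hp : Odd p.length) :
    ∃ (w : V) (c : G.Walk w w), c.IsCycle ∧ Odd c.length ∧ c.support ⊆ p.support := by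
  classical
  refine p.exists_odd_isCycle_or_even_length_bypass_iff.resolve_right fun hpar => ?_
  rw [(isPath_iff_nil.mp p.bypass_isPath).length_eq_zero] at hpar
  exact Nat.not_even_iff_odd.mpr hp (hpar.mp .zero)

end Walk

theorem exists_odd_isCycle_of_not_colorable_induce {s : Set V}
    (h : ¬ (G.induce s).Colorable 2) :
    ∃ (w : V) (c : G.Walk w w), c.IsCycle ∧ Odd c.length ∧ ∀ t ∈ c.support, t ∈ s := by
  rw [two_colorable_iff_forall_loop_even] at h
  push Not at h
  obtain ⟨u, p, hp⟩ := h
  obtain ⟨w, c, hc, hodd, hsub⟩ :=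
    (p.map (Embedding.induce s).toHom).exists_odd_isCycle_of_odd_length
      (by rwa [Walk.length_map, ← Nat.not_even_iff_odd])
  refine ⟨w, c, hc, hodd, fun t ht => ?_⟩
  obtain ⟨t', -, rfl⟩ := List.mem_map.mp (Walk.support_map _ _ ▸ hsub ht)
  exact t'.2

theorem colorable_succ_of_isIndepSet {s : Set V} {n : ℕ} (hs : G.IsIndepSet s)
    (h : (G.induce sᶜ).Colorable n) : G.Colorable (n + 1) := by
  classical
  obtain ⟨C⟩ := h
  refine ⟨Coloring.mk (fun v => if hv : v ∈ s then Fin.last n else (C ⟨v, hv⟩).castSucc) ?_⟩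
  intro a b hab
  by_cases ha : a ∈ s <;> by_cases hb : b ∈ s <;>
    simp only [ha, hb, dif_pos, dif_neg, not_false_eq_true]
  · exact (hs ha hb (G.ne_of_adj hab) hab).elim
  · exact fun heq => (C ⟨b, hb⟩).castSucc_lt_last.ne' heq
  · exact fun heq => (C ⟨a, ha⟩).castSucc_lt_last.ne heq
  · exact fun heq => C.valid (by simpa using hab) (Fin.castSucc_injective _ heq)

theorem Walk.IsCycle.exists_mem_edges_ne {u : V} {c : G.Walk u u} (hc : c.IsCycle)
    (e : Sym2 V) : ∃ e' ∈ c.edges, e' ≠ e := by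
  by_contra! h
  have hnodup := hc.edges_nodup
  rw [List.eq_replicate_of_mem h, List.nodup_replicate, length_edges] at hnodup
  have := hc.three_le_length
  omega

theorem Coloring.exists_mem_support_ne_of_isCycle {α : Type*} {H : SimpleGraph V}
    {e : Sym2 V} (C : (H.deleteEdges {e}).Coloring α) {u : V} {c : H.Walk u u}
    (hc : c.IsCycle) (k : α) :
    ∃ v ∈ c.support, C v ≠ k := by
  obtain ⟨e', he', hne⟩ := hc.exists_mem_edges_ne e
  induction e' using Sym2.ind with
  | _ a b =>
    have hab : (H.deleteEdges {e}).Adj a b :=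
      (deleteEdges_adj ..).mpr ⟨c.adj_of_mem_edges he', hne⟩
    by_cases ha : C a = k
    · exact ⟨b, c.snd_mem_support_of_mem_edges he', fun hb => C.valid hab (ha.trans hb.symm)⟩
    · exact ⟨a, c.fst_mem_support_of_mem_edges he', ha⟩

end SimpleGraph

theorem swapColor_involutive : Function.Involutive swapColor := fun c => by
  fin_cases c <;> rfl

theorem swapColor_eq_zero_iff {c : Fin 3} : swapColor c = 0 ↔ c = 0 := by
  revert c; decide

section Recoloring

variable {V : Type*} {H : SimpleGraph V} {π : V → Fin 3} {u v : V}

theorem rho_eq_zero_iff : rho H π v = 0 ↔ π v = 0 := by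
  unfold rho
  split_ifs <;> simp_all [swapColor_eq_zero_iff]

theorem rho_of_touchesOddCycle (hv : π v ≠ 0) (ht : TouchesOddCycle H π v hv) :
    rho H π v = π v := by
  unfold rho; rw [dif_neg hv, if_pos ht]

theorem rho_of_not_touchesOddCycle (hv : π v ≠ 0) (ht : ¬ TouchesOddCycle H π v hv) :
    rho H π v = swapColor (π v) := by
  unfold rho; rw [dif_neg hv, if_neg ht]

theorem TouchesOddCycle.of_reachable {hu : π u ≠ 0} {hv : π v ≠ 0}
    (hr : (H.induce {t | π t ≠ 0}).Reachable ⟨u, hu⟩ ⟨v, hv⟩)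
    (ht : TouchesOddCycle H π v hv) : TouchesOddCycle H π u hu :=
  let ⟨w, hw, hvw, hcycle⟩ := ht
  ⟨w, hw, hr.trans hvw, hcycle⟩

theorem rho_ne_rho_of_adj {G : SimpleGraph V} (hGH : G ≤ H) (π : G.Coloring (Fin 3)) {a b : V}
    (hab : G.Adj a b) : rho H π a ≠ rho H π b := by
  intro heq
  by_cases ha : π a = 0
  · exact π.valid hab (ha.trans (rho_eq_zero_iff.mp (heq ▸ rho_eq_zero_iff.mpr ha)).symm)
  by_cases hb : π b = 0
  · exact ha (rho_eq_zero_iff.mp (heq.symm ▸ rho_eq_zero_iff.mpr hb))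
  have hr : (H.induce {t | π t ≠ 0}).Reachable ⟨a, ha⟩ ⟨b, hb⟩ :=
    Adj.reachable (by simpa using hGH hab)
  refine π.valid hab ?_
  by_cases ht : TouchesOddCycle H π b hb
  · rwa [rho_of_touchesOddCycle ha (ht.of_reachable hr), rho_of_touchesOddCycle hb ht] at heq
  · have ht' : ¬ TouchesOddCycle H π a ha := fun ht' => ht (ht'.of_reachable hr.symm)
    rw [rho_of_not_touchesOddCycle ha ht', rho_of_not_touchesOddCycle hb ht] at heq
    exact swapColor_involutive.injective heq

theorem rho_eq_of_mem_odd_cycle {p : V} {c : H.Walk p p} (hc : c.IsCycle) (hodd : Odd c.length)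
    (hc2 : ∀ t ∈ c.support, π t ≠ 2) (hv : v ∈ c.support) : rho H π v = π v := by
  by_cases hv0 : π v = 0
  · rw [rho_eq_zero_iff.mpr hv0, hv0]
  · exact rho_of_touchesOddCycle hv0 ⟨v, hv0, .refl _, p, c, hc, hodd, hc2, hv⟩

theorem exists_touchesOddCycle_of_mem_odd_cycle {p : V} {c : H.Walk p p} (hc : c.IsCycle)
    (hodd : Odd c.length) (hc1 : ∀ t ∈ c.support, rho H π t ≠ 1) (hv : v ∈ c.support)
    (hv0 : π v ≠ 0) : ∃ t ∈ c.support, ∃ ht : π t ≠ 0, TouchesOddCycle H π t ht := by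
  by_contra! hnone
  have hc2 : ∀ t ∈ c.support, π t ≠ 2 := fun t ht ht2 => by
    have ht0 : π t ≠ 0 := by simp [ht2]
    have := rho_of_not_touchesOddCycle ht0 (hnone t ht ht0)
    rw [ht2] at this
    exact hc1 t ht this
  exact hnone v hv hv0 ⟨v, hv0, .refl _, p, c, hc, hodd, hc2, hv⟩

end Recoloring

theorem stmt13_general {V : Type*} (H : SimpleGraph V) (x y : V)
    (h4 : 4 ≤ H.chromaticNumber)
    (π : (H.deleteEdges {s(x,y)}).Coloring (Fin 3))
    (hx : π x = 0) :
    (∀ a b, H.Adj a b → rho H (⇑π) a = rho H (⇑π) b → s(a,b) = s(x,y)) ∧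
    ∃ (a b : V) (ha : rho H (⇑π) a ≠ 0) (hb : rho H (⇑π) b ≠ 0),
      (H.induce {v | rho H (⇑π) v ≠ 0}).Reachable ⟨a, ha⟩ ⟨b, hb⟩ ∧
      (∃ (p : V) (c : H.Walk p p), c.IsCycle ∧ Odd c.length ∧
        (∀ t ∈ c.support, rho H (⇑π) t ≠ 2) ∧ a ∈ c.support) ∧
      (∃ (p : V) (c : H.Walk p p), c.IsCycle ∧ Odd c.length ∧
        (∀ t ∈ c.support, rho H (⇑π) t ≠ 1) ∧ b ∈ c.support) := by
  have hproper : ∀ a b, H.Adj a b → rho H π a = rho H π b → s(a,b) = s(x,y) :=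
    fun a b hab heq => by_contra fun hne =>
      rho_ne_rho_of_adj (deleteEdges_le _) π ((deleteEdges_adj ..).mpr ⟨hab, hne⟩) heq
  refine ⟨hproper, ?_⟩
  have hindep : H.IsIndepSet {v | rho H π v = 1} := fun a ha b hb _ hab => by
    have hxab : x ∈ s(a, b) := hproper a b hab (ha.trans hb.symm) ▸ Sym2.mem_mk_left x y
    have hx1 : rho H π x = 1 := by rcases Sym2.mem_iff.mp hxab with rfl | rfl <;> assumption
    exact absurd (hx1.symm.trans (rho_eq_zero_iff.mpr hx)) (by decide)
  obtain ⟨p, c, hc, hodd, hc1⟩ := exists_odd_isCycle_of_not_colorable_induce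
    fun h2 => absurd (h4.trans (colorable_succ_of_isIndepSet hindep h2).chromaticNumber_le)
      (by norm_num)
  obtain ⟨v, hv, hv0⟩ := π.exists_mem_support_ne_of_isCycle hc 0
  obtain ⟨t, ht, ht0, w, hw0, htw, q, d, hd, hdodd, hd2, hwd⟩ :=
    exists_touchesOddCycle_of_mem_odd_cycle hc hodd hc1 hv hv0
  refine ⟨w, t, mt rho_eq_zero_iff.mp hw0, mt rho_eq_zero_iff.mp ht0, ?_,
    ⟨q, d, hd, hdodd, fun z hz => rho_eq_of_mem_odd_cycle hd hdodd hd2 hz ▸ hd2 z hz, hwd⟩,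
    ⟨p, c, hc, hodd, hc1, ht⟩⟩
  exact htw.symm.map (H.induceHomOfLE fun z hz => mt rho_eq_zero_iff.mp hz).toHom

theorem stmt13 {V : Type*} [Fintype V] (H : SimpleGraph V) (x y : V) (hxy : H.Adj x y)
    (h4 : 4 ≤ H.chromaticNumber)
    (π : (H.deleteEdges {s(x,y)}).Coloring (Fin 3))
    (hx : π x = 0) (hy : π y = 0) :
    (∀ a b, H.Adj a b → rho H (⇑π) a = rho H (⇑π) b → s(a,b) = s(x,y)) ∧
    ∃ (a b : V) (ha : rho H (⇑π) a ≠ 0) (hb : rho H (⇑π) b ≠ 0),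
      (H.induce {v | rho H (⇑π) v ≠ 0}).Reachable ⟨a, ha⟩ ⟨b, hb⟩ ∧
      (∃ (p : V) (c : H.Walk p p), c.IsCycle ∧ Odd c.length ∧
        (∀ t ∈ c.support, rho H (⇑π) t ≠ 2) ∧ a ∈ c.support) ∧
      (∃ (p : V) (c : H.Walk p p), c.IsCycle ∧ Odd c.length ∧
        (∀ t ∈ c.support, rho H (⇑π) t ≠ 1) ∧ b ∈ c.support) :=
  stmt13_general H x y h4 π hx
end

section
/- Every graph with no K_4 minor has a vertex of degree at most 2. -/
/-!
We prove the stronger statement that a finite graph has a `K₄` minor as soon as some vertex `a`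
has a neighbour and every other vertex has degree at least three, by induction on the number of
vertices. If every vertex other than `a` has degree at least four, contracting an edge at `a`
preserves the hypothesis. Otherwise some `v ≠ a` has exactly three neighbours `x, y, z`. If they
form a triangle we have a `K₄`; if `y ≁ z`, contracting `v` into `y` (or into `z`) only lowers
the degree of `x`, and only when `x ~ y` (resp. `x ~ z`). The remaining case is
`N(x) = {v, y, z}`. Then either `y` and `z` are joined by a path avoiding `v` and `x`, and `{v}`,
`{x}`, `{y}` and the rest of that path form a `K₄` model; or the component of `G - v - x`
containing `y`, say, misses `a`, and is a smaller graph in which only `y` has lost neighbours.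
-/

open SimpleGraph

open Set Function

theorem Set.exists_mem_ne_ne {α : Type*} {s : Set α} (hs : 3 ≤ s.ncard) (x y : α) :
    ∃ w ∈ s, w ≠ x ∧ w ≠ y := by
  by_contra! h
  have : s.ncard ≤ ({x, y} : Set α).ncard :=
    ncard_le_ncard fun w hw => or_iff_not_imp_left.mpr (h w hw)
  have := ncard_insert_le x {y}
  rw [ncard_singleton] at this
  omega

namespace SimpleGraph

variable {V W X : Type*} {G : SimpleGraph V}

theorem connected_induce_singleton (v : V) : (G.induce {v}).Connected := by
  rw [induce_singleton_eq_top]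
  exact connected_top

structure MinorModel (H : SimpleGraph W) (G : SimpleGraph V) where
  branch : W → Set V
  connected : ∀ w, (G.induce (branch w)).Connected
  disjoint : Pairwise (Disjoint on branch)
  exists_adj : ∀ ⦃a b⦄, H.Adj a b → ∃ x ∈ branch a, ∃ y ∈ branch b, G.Adj x y

theorem connected_induce_biUnion {H : SimpleGraph W} {s : Set W} (hs : (H.induce s).Connected)
    {f : W → Set V} (hf : ∀ a ∈ s, (G.induce (f a)).Connected)
    (hadj : ∀ a ∈ s, ∀ b ∈ s, H.Adj a b → ∃ x ∈ f a, ∃ y ∈ f b, G.Adj x y) :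
    (G.induce (⋃ a ∈ s, f a)).Connected := by
  set U := ⋃ a ∈ s, f a
  have sub : ∀ a ∈ s, f a ⊆ U := fun a ha => subset_biUnion_of_mem ha
  have reach_in (a : s) {x y : V} (hx : x ∈ f a) (hy : y ∈ f a) :
      (G.induce U).Reachable ⟨x, sub a a.2 hx⟩ ⟨y, sub a a.2 hy⟩ :=
    ((hf a a.2).preconnected ⟨x, hx⟩ ⟨y, hy⟩).map (induceHomOfLE G (sub a a.2)).toHom
  have reach_along (a b : s) (p : (H.induce s).Walk a b) {x y : V} (hx : x ∈ f a)
      (hy : y ∈ f b) : (G.induce U).Reachable ⟨x, sub a a.2 hx⟩ ⟨y, sub b b.2 hy⟩ := by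
    induction p generalizing x with
    | nil => exact reach_in _ hx hy
    | @cons a c b hac _ ih =>
      obtain ⟨x', hx', y', hy', hxy'⟩ := hadj a a.2 c c.2 hac
      have edge : (G.induce U).Adj ⟨x', sub a a.2 hx'⟩ ⟨y', sub c c.2 hy'⟩ := hxy'
      exact (reach_in a hx hx').trans (edge.reachable.trans (ih hy' hy))
  obtain ⟨a⟩ := hs.nonempty
  obtain ⟨⟨x, hx⟩⟩ := (hf a a.2).nonempty
  rw [connected_iff_exists_forall_reachable]
  refine ⟨⟨x, sub a a.2 hx⟩, fun ⟨y, hy⟩ => ?_⟩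
  obtain ⟨b, hb, hyb⟩ := mem_iUnion₂.mp hy
  exact reach_along a ⟨b, hb⟩ (hs.preconnected a ⟨b, hb⟩).some hx hyb

namespace MinorModel

def comp {H : SimpleGraph W} {K : SimpleGraph X} (N : MinorModel H G) (M : MinorModel K H) :
    MinorModel K G where
  branch u := ⋃ a ∈ M.branch u, N.branch a
  connected u := connected_induce_biUnion (M.connected u) (fun a _ => N.connected a)
    fun _ _ _ _ hab => N.exists_adj hab
  disjoint u w huw := by
    simp only [Function.onFun, disjoint_iUnion₂_left, disjoint_iUnion₂_right]
    intro a ha b hb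
    exact N.disjoint fun hab => Set.disjoint_left.mp (M.disjoint huw) hb (hab ▸ ha)
  exists_adj u w huw := by
    obtain ⟨a, ha, b, hb, hab⟩ := M.exists_adj huw
    obtain ⟨x, hx, y, hy, hxy⟩ := N.exists_adj hab
    exact ⟨x, mem_biUnion ha hx, y, mem_biUnion hb hy, hxy⟩

def ofCopy {H : SimpleGraph W} (f : Copy H G) : MinorModel H G where
  branch a := {f a}
  connected a := connected_induce_singleton (f a)
  disjoint _ _ hab := disjoint_singleton.mpr (f.injective.ne hab)
  exists_adj a b hab := ⟨f a, rfl, f b, rfl, f.toHom.map_adj hab⟩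

end MinorModel

/-- The contraction of the edge `vt`: `v` is merged into `t`, which keeps its name. -/
def contractEdge (G : SimpleGraph V) (v t : V) : SimpleGraph ({v}ᶜ : Set V) :=
  fromRel fun p q => G.Adj p q ∨ (p.1 = t ∧ G.Adj v q)

variable {v t : V}

theorem contractEdge_adj {p q : ({v}ᶜ : Set V)} :
    (G.contractEdge v t).Adj p q ↔
      p ≠ q ∧ (G.Adj p q ∨ (p.1 = t ∧ G.Adj v q) ∨ (q.1 = t ∧ G.Adj v p)) := by
  simp only [contractEdge, fromRel_adj, G.adj_comm (q : V)]
  tauto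

open scoped Classical in
def MinorModel.contractEdge (h : G.Adj v t) : MinorModel (G.contractEdge v t) G where
  branch p := if p.1 = t then {t, v} else {p.1}
  connected p := by
    by_cases hp : p.1 = t
    · rw [if_pos hp]; exact induce_pair_connected_of_adj h.symm
    · rw [if_neg hp]; exact connected_induce_singleton _
  disjoint p q hpq := by
    have hpq' : p.1 ≠ q.1 := Subtype.coe_ne_coe.mpr hpq
    have hp : p.1 ≠ v := p.2
    have hq : q.1 ≠ v := q.2
    simp only [onFun]
    split_ifs with hpt hqt hqt <;> simp_all
  exists_adj p q hpq := by
    have mem (p : ({v}ᶜ : Set V)) : p.1 ∈ (if p.1 = t then {t, v} else {p.1} : Set V) := by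
      split_ifs with h <;> simp [h]
    have mem_v {p : ({v}ᶜ : Set V)} (hp : p.1 = t) :
        v ∈ (if p.1 = t then {t, v} else {p.1} : Set V) := by rw [if_pos hp]; exact .inr rfl
    obtain ⟨-, hpq | ⟨hp, hvq⟩ | ⟨hq, hvp⟩⟩ := contractEdge_adj.mp hpq
    · exact ⟨p, mem p, q, mem q, hpq⟩
    · exact ⟨v, mem_v hp, q, mem q, hvq⟩
    · exact ⟨p, mem p, v, mem_v hq, hvp.symm⟩

end SimpleGraph

theorem hasK4Minor_iff {V : Type*} {G : SimpleGraph V} :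
    HasK4Minor G ↔ Nonempty (MinorModel (⊤ : SimpleGraph (Fin 4)) G) := by
  constructor
  · rintro ⟨H, -, hconn, hdisj, hadj⟩
    exact ⟨⟨fun i => (H i).verts, fun i => (hconn i).induce_verts,
      fun i j hij => hdisj i j hij, fun i j hij => hadj i j hij⟩⟩
  · rintro ⟨M⟩
    refine ⟨fun i => (⊤ : G.Subgraph).induce (M.branch i), fun i => ?_,
      fun i => connected_induce_iff.mp (M.connected i), fun i j hij => M.disjoint hij,
      fun i j hij => M.exists_adj hij⟩
    obtain ⟨⟨x, hx⟩⟩ := (M.connected i).nonempty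
    exact ⟨x, hx⟩

theorem HasK4Minor.of_minorModel {V W : Type*} {G : SimpleGraph V} {H : SimpleGraph W}
    (M : MinorModel H G) (h : HasK4Minor H) : HasK4Minor G :=
  let ⟨N⟩ := hasK4Minor_iff.mp h
  hasK4Minor_iff.mpr ⟨M.comp N⟩

theorem hasK4Minor_of_branchSets {V : Type*} {G : SimpleGraph V} {A B C D : Set V}
    (hA : (G.induce A).Connected) (hB : (G.induce B).Connected)
    (hC : (G.induce C).Connected) (hD : (G.induce D).Connected)
    (dAB : Disjoint A B) (dAC : Disjoint A C) (dAD : Disjoint A D)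
    (dBC : Disjoint B C) (dBD : Disjoint B D) (dCD : Disjoint C D)
    (eAB : ∃ x ∈ A, ∃ y ∈ B, G.Adj x y) (eAC : ∃ x ∈ A, ∃ y ∈ C, G.Adj x y)
    (eAD : ∃ x ∈ A, ∃ y ∈ D, G.Adj x y) (eBC : ∃ x ∈ B, ∃ y ∈ C, G.Adj x y)
    (eBD : ∃ x ∈ B, ∃ y ∈ D, G.Adj x y) (eCD : ∃ x ∈ C, ∃ y ∈ D, G.Adj x y) :
    HasK4Minor G := by
  have symm {S T : Set V} :
      (∃ x ∈ S, ∃ y ∈ T, G.Adj x y) → ∃ y ∈ T, ∃ x ∈ S, G.Adj y x :=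
    fun ⟨x, hx, y, hy, hxy⟩ => ⟨y, hy, x, hx, hxy.symm⟩
  refine hasK4Minor_iff.mpr
    ⟨⟨![A, B, C, D], fun i => ?_, fun i j hij => ?_, fun i j hij => ?_⟩⟩
  · fin_cases i <;> assumption
  · fin_cases i <;> fin_cases j <;>
      first | exact absurd rfl hij | assumption | exact Disjoint.symm (by assumption)
  · fin_cases i <;> fin_cases j <;>
      first | exact absurd rfl hij | assumption | exact symm (by assumption)

theorem hasK4Minor_of_adj {V : Type*} {G : SimpleGraph V} {a b c d : V} (hab : G.Adj a b)
    (hac : G.Adj a c) (had : G.Adj a d) (hbc : G.Adj b c) (hbd : G.Adj b d) (hcd : G.Adj c d) :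
    HasK4Minor G :=
  hasK4Minor_of_branchSets (connected_induce_singleton a) (connected_induce_singleton b)
    (connected_induce_singleton c) (connected_induce_singleton d)
    (disjoint_singleton.mpr hab.ne) (disjoint_singleton.mpr hac.ne) (disjoint_singleton.mpr had.ne)
    (disjoint_singleton.mpr hbc.ne) (disjoint_singleton.mpr hbd.ne) (disjoint_singleton.mpr hcd.ne)
    ⟨a, rfl, b, rfl, hab⟩ ⟨a, rfl, c, rfl, hac⟩ ⟨a, rfl, d, rfl, had⟩
    ⟨b, rfl, c, rfl, hbc⟩ ⟨b, rfl, d, rfl, hbd⟩ ⟨c, rfl, d, rfl, hcd⟩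

namespace SimpleGraph

variable {V : Type*} {G : SimpleGraph V}

structure MinDegreeThreeExcept (G : SimpleGraph V) (a : V) : Prop where
  exists_adj : ∃ b, G.Adj a b
  three_le_ncard : ∀ w ≠ a, 3 ≤ (G.neighborSet w).ncard

section contractEdge

variable {a v t : V} {p : ({v}ᶜ : Set V)}

theorem mem_image_neighborSet_contractEdge {q : V} (hqv : q ≠ v) (hpq : p.1 ≠ q)
    (h : G.Adj p q ∨ (p.1 = t ∧ G.Adj v q) ∨ (q = t ∧ G.Adj v p)) :
    q ∈ Subtype.val '' (G.contractEdge v t).neighborSet p :=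
  ⟨⟨q, hqv⟩, contractEdge_adj.mpr ⟨Subtype.coe_ne_coe.mp hpq, h⟩, rfl⟩

theorem subset_image_neighborSet_contractEdge :
    G.neighborSet p \ {v} ⊆ Subtype.val '' (G.contractEdge v t).neighborSet p :=
  fun _ ⟨hq, hqv⟩ => mem_image_neighborSet_contractEdge hqv hq.ne (.inl hq)

theorem MinDegreeThreeExcept.exists_adj_contractEdge (h : MinDegreeThreeExcept G a)
    (hva : v ≠ a) (hvt : G.Adj v t) : ∃ q, (G.contractEdge v t).Adj ⟨a, hva.symm⟩ q := by
  obtain ⟨b, hab⟩ := h.exists_adj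
  by_cases hbv : b = v
  · subst hbv
    by_cases hat : a = t
    · obtain ⟨q, hvq, hqt, -⟩ := Set.exists_mem_ne_ne (h.three_le_ncard b hva) t t
      exact ⟨⟨q, hvq.ne'⟩, contractEdge_adj.mpr
        ⟨Subtype.coe_ne_coe.mp (ne_of_eq_of_ne hat hqt.symm), .inr (.inl ⟨hat, hvq⟩)⟩⟩
    · exact ⟨⟨t, hvt.ne'⟩,
        contractEdge_adj.mpr ⟨Subtype.coe_ne_coe.mp hat, .inr (.inr ⟨rfl, hab.symm⟩)⟩⟩
  · exact ⟨⟨b, hbv⟩, contractEdge_adj.mpr ⟨Subtype.coe_ne_coe.mp hab.ne, .inl hab⟩⟩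

variable [Finite V]

theorem ncard_le_ncard_neighborSet_of_subset_image {s : Set V} {H : SimpleGraph s} {p : s}
    {T : Set V} (hT : T ⊆ Subtype.val '' H.neighborSet p) :
    T.ncard ≤ (H.neighborSet p).ncard := by
  rw [← ncard_image_of_injective _ Subtype.val_injective]
  exact ncard_le_ncard hT

theorem ncard_neighborSet_le_contractEdge_add_one :
    (G.neighborSet p).ncard ≤ ((G.contractEdge v t).neighborSet p).ncard + 1 := by
  have := ncard_le_ncard_neighborSet_of_subset_image
    (subset_image_neighborSet_contractEdge (G := G) (t := t) (p := p))
  have := pred_ncard_le_ncard_sdiff_singleton (G.neighborSet p) v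
  omega

theorem ncard_neighborSet_le_contractEdge_of_not_adj (hpv : ¬ G.Adj p v) :
    (G.neighborSet p).ncard ≤ ((G.contractEdge v t).neighborSet p).ncard :=
  ncard_le_ncard_neighborSet_of_subset_image fun _ hq =>
    subset_image_neighborSet_contractEdge ⟨hq, fun hqv => hpv (hqv ▸ hq)⟩

theorem ncard_neighborSet_le_contractEdge {w : V}
    (hw : w ∈ Subtype.val '' (G.contractEdge v t).neighborSet p) (hwp : w ∉ G.neighborSet p) :
    (G.neighborSet p).ncard ≤ ((G.contractEdge v t).neighborSet p).ncard := by
  have := ncard_le_ncard_neighborSet_of_subset_image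
    (insert_subset hw (subset_image_neighborSet_contractEdge (G := G) (t := t) (p := p)))
  rw [ncard_insert_of_notMem fun h => hwp h.1] at this
  have := pred_ncard_le_ncard_sdiff_singleton (G.neighborSet p) v
  omega

theorem MinDegreeThreeExcept.contractEdge_of_four_le (h : MinDegreeThreeExcept G a)
    (hva : v ≠ a) (hvt : G.Adj v t) (h4 : ∀ w ≠ a, 4 ≤ (G.neighborSet w).ncard) :
    MinDegreeThreeExcept (G.contractEdge v t) ⟨a, hva.symm⟩ := by
  refine ⟨h.exists_adj_contractEdge hva hvt, fun p hpa => ?_⟩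
  have := h4 p (Subtype.coe_ne_coe.mpr hpa)
  have := ncard_neighborSet_le_contractEdge_add_one (G := G) (t := t) (p := p)
  omega

theorem MinDegreeThreeExcept.contractEdge_of_not_adj (h : MinDegreeThreeExcept G a) {s r : V}
    (hva : v ≠ a) (hN : G.neighborSet v = {t, s, r}) (hts : t ≠ s) (htr : t ≠ r)
    (hnts : ¬ G.Adj t s) (hr : ¬ G.Adj r t ∨ r = a ∨ 4 ≤ (G.neighborSet r).ncard) :
    MinDegreeThreeExcept (G.contractEdge v t) ⟨a, hva.symm⟩ := by
  have hvt : G.Adj v t := by simp [← mem_neighborSet, hN]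
  have hvs : G.Adj v s := by simp [← mem_neighborSet, hN]
  refine ⟨h.exists_adj_contractEdge hva hvt, fun p hpa => ?_⟩
  have hpa' : p.1 ≠ a := Subtype.coe_ne_coe.mpr hpa
  have h3 := h.three_le_ncard p hpa'
  by_cases hpv : G.Adj p v
  · have hp : p.1 ∈ ({t, s, r} : Set V) := hN ▸ hpv.symm
    rcases hp with hpt | hps | hpr
    · have := ncard_neighborSet_le_contractEdge (G := G) (p := p)
        (mem_image_neighborSet_contractEdge hvs.ne' (hpt ▸ hts) (.inr (.inl ⟨hpt, hvs⟩)))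
        (hpt ▸ hnts)
      omega
    · have := ncard_neighborSet_le_contractEdge (G := G) (p := p)
        (mem_image_neighborSet_contractEdge hvt.ne' (hps ▸ hts.symm)
          (.inr (.inr ⟨rfl, hpv.symm⟩)))
        (hps ▸ fun h => hnts h.symm)
      omega
    · rcases hr with hrt | rfl | h4
      · have := ncard_neighborSet_le_contractEdge (G := G) (p := p)
          (mem_image_neighborSet_contractEdge hvt.ne' (hpr ▸ htr.symm)
            (.inr (.inr ⟨rfl, hpv.symm⟩)))
          (hpr ▸ hrt)
        omega
      · exact absurd hpr hpa'
      · have := ncard_neighborSet_le_contractEdge_add_one (G := G) (t := t) (p := p)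
        rw [hpr] at this
        omega
  · have := ncard_neighborSet_le_contractEdge_of_not_adj (t := t) hpv
    omega

end contractEdge

theorem MinDegreeThreeExcept.induce [Finite V] {a : V} (h : MinDegreeThreeExcept G a)
    {C : Set V} {y : V} (hy : y ∈ C) (haC : a ∉ C) (hyC : ∃ w ∈ C, G.Adj y w)
    (hclosed : ∀ p ∈ C, p ≠ y → G.neighborSet p ⊆ C) :
    MinDegreeThreeExcept (G.induce C) ⟨y, hy⟩ := by
  obtain ⟨w, hw, hyw⟩ := hyC
  refine ⟨⟨⟨w, hw⟩, hyw⟩, fun p hpy => ?_⟩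
  refine (h.three_le_ncard p (ne_of_mem_of_not_mem p.2 haC)).trans ?_
  exact ncard_le_ncard_neighborSet_of_subset_image fun q hq =>
    ⟨⟨q, hclosed p p.2 (Subtype.coe_ne_coe.mpr hpy) hq⟩, hq, rfl⟩

theorem Reachable.eq_of_forall_not_adj {u x : V} (h : G.Reachable u x) (hx : ∀ w, ¬ G.Adj w x) :
    u = x := by
  rw [reachable_iff_reflTransGen] at h
  cases h with
  | refl => rfl
  | tail _ hwx => exact absurd hwx (hx _)

theorem Reachable.exists_adj_deleteIncidenceSet {y z : V} (h : G.Reachable z y) (hzy : z ≠ y) :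
    ∃ w, (G.deleteIncidenceSet y).Reachable z w ∧ G.Adj w y := by
  rw [reachable_iff_reflTransGen] at h
  induction h using Relation.ReflTransGen.head_induction_on with
  | refl => exact absurd rfl hzy
  | @head z c hzc _ ih =>
    by_cases hcy : c = y
    · exact ⟨z, .rfl, hcy ▸ hzc⟩
    · obtain ⟨w, hcw, hwy⟩ := ih hcy
      exact ⟨w, (deleteIncidenceSet_adj.mpr ⟨hzc, hzy, hcy⟩).reachable.trans hcw, hwy⟩

theorem hasK4Minor_of_reachable_deleteIncidenceSet {v x y z : V} (hvx : G.Adj v x)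
    (hvy : G.Adj v y) (hvz : G.Adj v z) (hxy : G.Adj x y) (hxz : G.Adj x z) (hyz : y ≠ z)
    (hreach : ((G.deleteIncidenceSet v).deleteIncidenceSet x).Reachable z y) : HasK4Minor G := by
  set H := (G.deleteIncidenceSet v).deleteIncidenceSet x
  obtain ⟨w, hzw, hwy⟩ := hreach.exists_adj_deleteIncidenceSet hyz.symm
  set D := ((H.deleteIncidenceSet y).connectedComponentMk z).supp
  have hHG : H ≤ G := (deleteIncidenceSet_le _ _).trans (deleteIncidenceSet_le _ _)
  have hD : (G.induce D).Connected :=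
    (ConnectedComponent.maximal_connected_induce_supp _).1.mono fun _ _ h =>
      hHG (deleteIncidenceSet_le _ _ h)
  have hzD : z ∈ D := rfl
  have hwD : w ∈ D := ConnectedComponent.eq.mpr hzw.symm
  have not_mem {u : V} (hu : ∀ w, ¬ (H.deleteIncidenceSet y).Adj w u) (huz : u ≠ z) :
      u ∉ D :=
    fun huD => huz (Reachable.eq_of_forall_not_adj (ConnectedComponent.eq.mp huD).symm hu).symm
  have hvD : v ∉ D := not_mem (by simp [H, deleteIncidenceSet_adj]) hvz.ne
  have hxD : x ∉ D := not_mem (by simp [H, deleteIncidenceSet_adj]) hxz.ne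
  have hyD : y ∉ D := not_mem (by simp [H, deleteIncidenceSet_adj]) hyz
  exact hasK4Minor_of_branchSets (connected_induce_singleton v) (connected_induce_singleton x)
    (connected_induce_singleton y) hD (disjoint_singleton.mpr hvx.ne)
    (disjoint_singleton.mpr hvy.ne) (disjoint_singleton_left.mpr hvD)
    (disjoint_singleton.mpr hxy.ne) (disjoint_singleton_left.mpr hxD)
    (disjoint_singleton_left.mpr hyD) ⟨v, rfl, x, rfl, hvx⟩ ⟨v, rfl, y, rfl, hvy⟩
    ⟨v, rfl, z, hzD, hvz⟩ ⟨x, rfl, y, rfl, hxy⟩ ⟨x, rfl, z, hzD, hxz⟩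
    ⟨y, rfl, w, hwD, (hHG hwy).symm⟩

namespace MinDegreeThreeExcept

variable [Finite V] {a : V}

theorem hasK4Minor_of_not_reachable (h : MinDegreeThreeExcept G a)
    (ih : ∀ s : Set V, s ≠ univ → ∀ (H : SimpleGraph s) (b : s),
      MinDegreeThreeExcept H b → HasK4Minor H)
    {v x y z : V} (hNv : G.neighborSet v ⊆ {x, y, z}) (hNx : G.neighborSet x ⊆ {v, y, z})
    (hyv : y ≠ v) (hyx : y ≠ x)
    (hyz : ¬ ((G.deleteIncidenceSet v).deleteIncidenceSet x).Reachable y z)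
    (hya : ¬ ((G.deleteIncidenceSet v).deleteIncidenceSet x).Reachable y a) : HasK4Minor G := by
  set H := (G.deleteIncidenceSet v).deleteIncidenceSet x
  set C := {u | H.Reachable y u}
  have hvC : v ∉ C := fun hv =>
    hyv (hv.eq_of_forall_not_adj (by simp [H, deleteIncidenceSet_adj]))
  have hxC : x ∉ C := fun hx =>
    hyx (hx.eq_of_forall_not_adj (by simp [H, deleteIncidenceSet_adj]))
  have hclosed : ∀ p ∈ C, p ≠ y → G.neighborSet p ⊆ C := by
    intro p hp hpy q hpq
    have hqv : q ≠ v := by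
      rintro rfl
      rcases hNv hpq.symm with rfl | rfl | rfl
      exacts [hxC hp, hpy rfl, hyz hp]
    have hqx : q ≠ x := by
      rintro rfl
      rcases hNx hpq.symm with rfl | rfl | rfl
      exacts [hvC hp, hpy rfl, hyz hp]
    have hHpq : H.Adj p q := deleteIncidenceSet_adj.mpr
      ⟨deleteIncidenceSet_adj.mpr ⟨hpq, ne_of_mem_of_not_mem hp hvC, hqv⟩,
        ne_of_mem_of_not_mem hp hxC, hqx⟩
    exact hp.trans hHpq.reachable
  have hyC : ∃ w ∈ C, G.Adj y w := by
    have hya' : y ≠ a := fun hya' => hya (hya' ▸ .rfl)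
    obtain ⟨w, hyw, hwv, hwx⟩ := Set.exists_mem_ne_ne (h.three_le_ncard y hya') v x
    exact ⟨w, (deleteIncidenceSet_adj.mpr
      ⟨deleteIncidenceSet_adj.mpr ⟨hyw, hyv, hwv⟩, hyx, hwx⟩).reachable, hyw⟩
  have hCG := ih C ((ne_univ_iff_exists_notMem C).mpr ⟨v, hvC⟩) _ _
    (h.induce (y := y) .rfl hya hyC hclosed)
  exact hCG.of_minorModel (.ofCopy (Copy.induce G C))

theorem hasK4Minor_of_twins (h : MinDegreeThreeExcept G a)
    (ih : ∀ s : Set V, s ≠ univ → ∀ (H : SimpleGraph s) (b : s),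
      MinDegreeThreeExcept H b → HasK4Minor H)
    {v x y z : V} (hNv : G.neighborSet v = {x, y, z}) (hNx : G.neighborSet x = {v, y, z})
    (hyz : y ≠ z) : HasK4Minor G := by
  have hvx : G.Adj v x := by simp [← mem_neighborSet, hNv]
  have hvy : G.Adj v y := by simp [← mem_neighborSet, hNv]
  have hvz : G.Adj v z := by simp [← mem_neighborSet, hNv]
  have hxy : G.Adj x y := by simp [← mem_neighborSet, hNx]
  have hxz : G.Adj x z := by simp [← mem_neighborSet, hNx]
  set H := (G.deleteIncidenceSet v).deleteIncidenceSet x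
  by_cases hzy : H.Reachable z y
  · exact hasK4Minor_of_reachable_deleteIncidenceSet hvx hvy hvz hxy hxz hyz hzy
  by_cases hya : H.Reachable y a
  · exact h.hasK4Minor_of_not_reachable ih (y := z) (z := y) (by rw [hNv, pair_comm])
      (by rw [hNx, pair_comm]) hvz.ne' hxz.ne' hzy fun hza => hzy (hza.trans hya.symm)
  · exact h.hasK4Minor_of_not_reachable ih hNv.le hNx.le hvy.ne' hxy.ne'
      (fun h => hzy h.symm) hya

theorem hasK4Minor_of_not_adj (h : MinDegreeThreeExcept G a)
    (ih : ∀ s : Set V, s ≠ univ → ∀ (H : SimpleGraph s) (b : s),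
      MinDegreeThreeExcept H b → HasK4Minor H)
    {v x y z : V} (hva : v ≠ a) (hN : G.neighborSet v = {x, y, z}) (hxy : x ≠ y) (hxz : x ≠ z)
    (hyz : y ≠ z) (hnyz : ¬ G.Adj y z) : HasK4Minor G := by
  have contract {t s r : V} (hNtsr : G.neighborSet v = {t, s, r}) (hts : t ≠ s) (htr : t ≠ r)
      (hnts : ¬ G.Adj t s) (hr : ¬ G.Adj r t ∨ r = a ∨ 4 ≤ (G.neighborSet r).ncard) :
      HasK4Minor G :=
    (ih _ (compl_ne_univ.mpr (singleton_nonempty v)) _ _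
      (h.contractEdge_of_not_adj hva hNtsr hts htr hnts hr)).of_minorModel
      (.contractEdge (by simp [← mem_neighborSet, hNtsr]))
  have hvy : G.Adj v y := by simp [← mem_neighborSet, hN]
  have hvz : G.Adj v z := by simp [← mem_neighborSet, hN]
  have hyzx : G.neighborSet v = {y, z, x} := by rw [hN, insert_comm x y, pair_comm x z]
  by_cases hxy' : G.Adj x y
  · by_cases hxz' : G.Adj x z
    · by_cases hx : x = a ∨ 4 ≤ (G.neighborSet x).ncard
      · exact contract hyzx hyz hxy.symm hnyz (.inr hx)
      · -- contracting `vy` or `vz` would leave `x` with only two neighbours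
        have hx3 : (G.neighborSet x).ncard ≤ 3 := by
          have := (not_or.mp hx).2
          omega
        have hNx : G.neighborSet x = {v, y, z} := by
          refine (eq_of_subset_of_ncard_le ?_ ?_).symm
          · exact insert_subset (G.adj_symm (by simp [← mem_neighborSet, hN]))
              (insert_subset hxy' (singleton_subset_iff.mpr hxz'))
          · rwa [ncard_eq_three.mpr ⟨v, y, z, hvy.ne, hvz.ne, hyz, rfl⟩]
        exact h.hasK4Minor_of_twins ih hN hNx hyz
    · exact contract (t := z) (s := y) (r := x) (by rw [hyzx, insert_comm y z]) hyz.symm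
        hxz.symm (fun h => hnyz h.symm) (.inl hxz')
  · exact contract hyzx hyz hxy.symm hnyz (.inl hxy')

theorem hasK4Minor_of_ncard_eq_three (h : MinDegreeThreeExcept G a)
    (ih : ∀ s : Set V, s ≠ univ → ∀ (H : SimpleGraph s) (b : s),
      MinDegreeThreeExcept H b → HasK4Minor H)
    {v : V} (hva : v ≠ a) (hv : (G.neighborSet v).ncard = 3) : HasK4Minor G := by
  obtain ⟨x, y, z, hxy, hxz, hyz, hN⟩ := ncard_eq_three.mp hv
  by_cases hyz' : G.Adj y z
  · by_cases hxz' : G.Adj x z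
    · by_cases hxy' : G.Adj x y
      · have hvx : G.Adj v x := by simp [← mem_neighborSet, hN]
        have hvy : G.Adj v y := by simp [← mem_neighborSet, hN]
        have hvz : G.Adj v z := by simp [← mem_neighborSet, hN]
        exact hasK4Minor_of_adj hvx hvy hvz hxy' hxz' hyz'
      · exact h.hasK4Minor_of_not_adj ih hva (by rw [hN, pair_comm y z, insert_comm x z])
          hxz.symm hyz.symm hxy hxy'
    · exact h.hasK4Minor_of_not_adj ih hva (by rw [hN, insert_comm x y]) hxy.symm hyz hxz hxz'
  · exact h.hasK4Minor_of_not_adj ih hva hN hxy hxz hyz hyz'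

theorem hasK4Minor_of_forall_ne_univ (h : MinDegreeThreeExcept G a)
    (ih : ∀ s : Set V, s ≠ univ → ∀ (H : SimpleGraph s) (b : s),
      MinDegreeThreeExcept H b → HasK4Minor H) : HasK4Minor G := by
  by_cases h3 : ∃ v ≠ a, (G.neighborSet v).ncard = 3
  · obtain ⟨v, hva, hv⟩ := h3
    exact h.hasK4Minor_of_ncard_eq_three ih hva hv
  · have h4 : ∀ w ≠ a, 4 ≤ (G.neighborSet w).ncard := fun w hwa => by
      have := h.three_le_ncard w hwa
      have : (G.neighborSet w).ncard ≠ 3 := fun h => h3 ⟨w, hwa, h⟩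
      omega
    obtain ⟨b, hab⟩ := h.exists_adj
    exact (ih _ (compl_ne_univ.mpr (singleton_nonempty b)) _ _
      (h.contractEdge_of_four_le hab.ne' hab.symm h4)).of_minorModel (.contractEdge hab.symm)

theorem hasK4Minor (h : MinDegreeThreeExcept G a) : HasK4Minor G := by
  induction hn : Nat.card V using Nat.strong_induction_on generalizing V with
  | _ n ih =>
    refine h.hasK4Minor_of_forall_ne_univ fun s hs H b hH => ih _ ?_ hH rfl
    rw [← hn, Nat.card_coe_set_eq]
    exact ncard_lt_card hs

end MinDegreeThreeExcept

end SimpleGraph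

theorem stmt14 {V : Type*} [Fintype V] [Nonempty V] (G : SimpleGraph V) [DecidableRel G.Adj]
    (h : ¬ HasK4Minor G) : ∃ v : V, G.degree v ≤ 2 := by
  by_contra! hdeg
  have h3 (w : V) : 3 ≤ (G.neighborSet w).ncard := by
    rw [ncard_eq_toFinset_card', Set.toFinset_card, card_neighborSet_eq_degree]
    exact hdeg w
  obtain ⟨a⟩ := ‹Nonempty V›
  obtain ⟨b, hab, -⟩ := Set.exists_mem_ne_ne (h3 a) a a
  exact h (MinDegreeThreeExcept.hasK4Minor ⟨⟨b, hab⟩, fun w _ => h3 w⟩)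
end

section
/- Suppose a connected graph H contains cycles C and C' sharing an edge, and a path P meeting C only at one endpoint u and C' only at the other endpoint v, with u ∉ V(C'), v ∉ V(C), and u ≠ v. Then H contains a K_4 minor. -/
/-!
Let `xy` be the common edge of `C` and `C'`. Going around `C'` from `v`, let `p` and `q` be the
first and the last vertex on `C`; they differ, since otherwise `C'` would meet `C` in one vertex
only, not in `x` and `y`. The arcs of `C'` from `v` to `p` and to `q` (without `p`, `q`) together
with `P` (without `u`) form a connected set `D` disjoint from `C` and adjacent to the three
distinct vertices `u`, `p`, `q` of `C`. Cutting `C` at `u`, `p`, `q` into three arcs gives, with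
`D`, the four branch sets of a `K₄` minor.
-/

open SimpleGraph

namespace SimpleGraph

variable {V : Type*} {G : SimpleGraph V}

def Subgraph.Touches (A B : G.Subgraph) : Prop :=
  ∃ a ∈ A.verts, ∃ b ∈ B.verts, G.Adj a b

lemma Subgraph.Touches.symm {A B : G.Subgraph} (h : A.Touches B) : B.Touches A :=
  let ⟨a, ha, b, hb, hab⟩ := h
  ⟨b, hb, a, ha, hab.symm⟩

lemma hasK4Minor_of_touches {A B C D : G.Subgraph}
    (hA : A.Connected) (hB : B.Connected) (hC : C.Connected) (hD : D.Connected)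
    (dAB : Disjoint A.verts B.verts) (dAC : Disjoint A.verts C.verts)
    (dAD : Disjoint A.verts D.verts) (dBC : Disjoint B.verts C.verts)
    (dBD : Disjoint B.verts D.verts) (dCD : Disjoint C.verts D.verts)
    (tAB : A.Touches B) (tAC : A.Touches C) (tAD : A.Touches D) (tBC : B.Touches C)
    (tBD : B.Touches D) (tCD : C.Touches D) : HasK4Minor G := by
  refine ⟨![A, B, C, D], ?_, ?_, ?_, ?_⟩
  · intro i
    fin_cases i
    exacts [⟨_, tAB.choose_spec.1⟩, ⟨_, tBC.choose_spec.1⟩, ⟨_, tCD.choose_spec.1⟩,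
      ⟨_, tCD.choose_spec.2.choose_spec.1⟩]
  · intro i
    fin_cases i <;> assumption
  · intro i j hij
    fin_cases i <;> fin_cases j <;> first
      | exact absurd rfl hij | assumption | exact Disjoint.symm ‹_›
  · intro i j hij
    fin_cases i <;> fin_cases j <;> first
      | exact absurd rfl hij | assumption | exact Subgraph.Touches.symm ‹_›

namespace Walk

variable {u v : V}

def segment (p : G.Walk u v) (i j : ℕ) : G.Subgraph :=
  ((p.drop i).take (j - i)).toSubgraph

lemma segment_connected (p : G.Walk u v) (i j : ℕ) : (p.segment i j).Connected :=
  toSubgraph_connected _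

lemma mem_segment_verts {p : G.Walk u v} {i j : ℕ} (hij : i ≤ j) (hj : j ≤ p.length) {x : V} :
    x ∈ (p.segment i j).verts ↔ ∃ m, i ≤ m ∧ m ≤ j ∧ p.getVert m = x := by
  rw [segment, mem_verts_toSubgraph, mem_support_iff_exists_getVert]
  simp only [take_getVert, drop_getVert, take_length, drop_length]
  constructor
  · rintro ⟨n, rfl, hn⟩
    exact ⟨i + min (j - i) n, by omega, by omega, rfl⟩
  · rintro ⟨m, him, hmj, rfl⟩
    exact ⟨m - i, by rw [min_eq_right (by omega), Nat.add_sub_cancel' him], by omega⟩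

lemma getVert_mem_segment (p : G.Walk u v) {i j m : ℕ} (him : i ≤ m) (hmj : m ≤ j) :
    p.getVert m ∈ (p.segment i j).verts := by
  rw [segment, mem_verts_toSubgraph]
  convert getVert_mem_support _ (m - i) using 1
  simp only [take_getVert, drop_getVert]
  congr 1
  omega

lemma segment_verts_subset_support (p : G.Walk u v) (i j : ℕ) :
    (p.segment i j).verts ⊆ {x | x ∈ p.support} := by
  intro x hx
  rw [segment, mem_verts_toSubgraph, mem_support_iff_exists_getVert] at hx
  obtain ⟨n, rfl, -⟩ := hx
  simp only [take_getVert, drop_getVert]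
  exact getVert_mem_support _ _

lemma segment_touches_segment_succ (p : G.Walk u v) {i j k : ℕ} (hij : i ≤ j) (hjk : j < k)
    (hj : j < p.length) : (p.segment i j).Touches (p.segment (j + 1) k) :=
  ⟨_, p.getVert_mem_segment hij le_rfl, _, p.getVert_mem_segment le_rfl hjk, p.adj_getVert_succ hj⟩

lemma IsCycle.disjoint_segment {c : G.Walk u u} (hc : c.IsCycle) {i j k l : ℕ} (hij : i ≤ j)
    (hjk : j < k) (hkl : k ≤ l) (hl : l < c.length) :
    Disjoint (c.segment i j).verts (c.segment k l).verts := by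
  rw [Set.disjoint_left]
  rintro _ hx hx'
  rw [mem_segment_verts hij (by omega)] at hx
  rw [mem_segment_verts hkl hl.le] at hx'
  obtain ⟨m, -, hmj, rfl⟩ := hx
  obtain ⟨m', hkm', hm'l, hm'⟩ := hx'
  have := hc.getVert_injOn' (show m' ≤ c.length - 1 by omega)
    (show m ≤ c.length - 1 by omega) hm'
  omega

/-- The arcs `[0, i)`, `[i, j)`, `[j, n)` of a cycle, together with `D`, are the branch sets. -/
lemma IsCycle.hasK4Minor_of_indices {c : G.Walk u u} (hc : c.IsCycle) {i j : ℕ} (hi : 0 < i)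
    (hij : i < j) (hj : j < c.length) {D : G.Subgraph} (hD : D.Connected)
    (hDc : ∀ x ∈ D.verts, x ∉ c.support) (hDu : ∃ d ∈ D.verts, G.Adj u d)
    (hDi : ∃ d ∈ D.verts, G.Adj (c.getVert i) d) (hDj : ∃ d ∈ D.verts, G.Adj (c.getVert j) d) :
    HasK4Minor G := by
  have hoff : ∀ k l, Disjoint (c.segment k l).verts D.verts := fun k l =>
    Set.disjoint_left.mpr fun x hx hxD => hDc x hxD (c.segment_verts_subset_support k l hx)
  have hAB := c.segment_touches_segment_succ (Nat.zero_le (i - 1)) (by omega : i - 1 < j - 1)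
    (by omega)
  have hBC := c.segment_touches_segment_succ (by omega : i ≤ j - 1)
    (by omega : j - 1 < c.length - 1) (by omega)
  rw [Nat.sub_add_cancel hi] at hAB
  rw [Nat.sub_add_cancel (by omega : 1 ≤ j)] at hBC
  have hAC : (c.segment 0 (i - 1)).Touches (c.segment j (c.length - 1)) := by
    refine ⟨_, c.getVert_mem_segment le_rfl (Nat.zero_le _), _,
      c.getVert_mem_segment (by omega : j ≤ c.length - 1) le_rfl, ?_⟩
    have := c.adj_getVert_succ (by omega : c.length - 1 < c.length)
    rw [Nat.sub_add_cancel (by omega), getVert_length] at this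
    rw [getVert_zero]
    exact this.symm
  refine hasK4Minor_of_touches (c.segment_connected _ _) (c.segment_connected _ _)
    (c.segment_connected _ _) hD
    (hc.disjoint_segment (Nat.zero_le _) (by omega) (by omega) (by omega))
    (hc.disjoint_segment (Nat.zero_le _) (by omega) (by omega) (by omega)) (hoff _ _)
    (hc.disjoint_segment (by omega) (by omega) (by omega) (by omega)) (hoff _ _) (hoff _ _)
    hAB hAC ?_ hBC ?_ ?_
  · obtain ⟨d, hd, had⟩ := hDu
    exact ⟨_, c.getVert_mem_segment le_rfl (Nat.zero_le _), d, hd, by rwa [getVert_zero]⟩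
  · obtain ⟨d, hd, had⟩ := hDi
    exact ⟨_, c.getVert_mem_segment le_rfl (by omega), d, hd, had⟩
  · obtain ⟨d, hd, had⟩ := hDj
    exact ⟨_, c.getVert_mem_segment le_rfl (by omega), d, hd, had⟩

lemma IsCycle.hasK4Minor_s19 {a : V} {c : G.Walk a a} (hc : c.IsCycle) {u p q : V}
    (hu : u ∈ c.support) (hp : p ∈ c.support) (hq : q ∈ c.support) (hpu : p ≠ u) (hqu : q ≠ u)
    (hpq : p ≠ q) {D : G.Subgraph} (hD : D.Connected) (hDc : ∀ x ∈ D.verts, x ∉ c.support)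
    (hDu : ∃ d ∈ D.verts, G.Adj u d) (hDp : ∃ d ∈ D.verts, G.Adj p d)
    (hDq : ∃ d ∈ D.verts, G.Adj q d) : HasK4Minor G := by
  classical
  have hmem {x : V} : x ∈ (c.rotate u hu).support ↔ x ∈ c.support := c.mem_support_rotate_iff u hu
  obtain ⟨i, rfl, hi⟩ := mem_support_iff_exists_getVert.mp (hmem.mpr hp)
  obtain ⟨j, rfl, hj⟩ := mem_support_iff_exists_getVert.mp (hmem.mpr hq)
  have interior {k : ℕ} (hk : (c.rotate u hu).getVert k ≠ u) :
      k ≠ 0 ∧ k ≠ (c.rotate u hu).length :=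
    ⟨by rintro rfl; exact hk (getVert_zero _), by rintro rfl; exact hk (getVert_length _)⟩
  have hi' := interior hpu
  have hj' := interior hqu
  have hDc' : ∀ x ∈ D.verts, x ∉ (c.rotate u hu).support := fun x hx hxc => hDc x hx (hmem.mp hxc)
  rcases Nat.lt_or_gt_of_ne (show i ≠ j by rintro rfl; exact hpq rfl) with hij | hji
  · exact (hc.rotate hu).hasK4Minor_of_indices (by omega) hij (by omega) hD hDc' hDu hDp hDq
  · exact (hc.rotate hu).hasK4Minor_of_indices (by omega) hji (by omega) hD hDc' hDu hDq hDp

lemma IsPath.start_notMem_segment {p : G.Walk u v} (hp : p.IsPath) (hlen : 1 ≤ p.length) :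
    u ∉ (p.segment 1 p.length).verts := by
  intro hu
  obtain ⟨m, hm, hml, hmu⟩ := (mem_segment_verts hlen le_rfl).mp hu
  have := hp.getVert_injOn (show m ≤ p.length from hml) (show 0 ≤ p.length from Nat.zero_le _)
    (hmu.trans p.getVert_zero.symm)
  omega

/-- The arc of `c` from `p` to `q` through `v` whose interior `D` avoids `S`: take `p` to be the
first and `q` the last vertex of `c` in `S`. -/
lemma IsCycle.exists_arc_avoiding {v : V} {c : G.Walk v v} (hc : c.IsCycle) {S : Set V}
    (hv : v ∉ S) {x y : V} (hx : x ∈ c.support) (hy : y ∈ c.support) (hxS : x ∈ S) (hyS : y ∈ S)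
    (hxy : x ≠ y) :
    ∃ p q, p ≠ q ∧ p ∈ S ∧ q ∈ S ∧ p ∈ c.support ∧ q ∈ c.support ∧
      ∃ D : G.Subgraph, D.Connected ∧ v ∈ D.verts ∧ (∀ w ∈ D.verts, w ∉ S) ∧
        (∃ d ∈ D.verts, G.Adj p d) ∧ (∃ d ∈ D.verts, G.Adj q d) := by
  classical
  obtain ⟨mx, rfl, hmx⟩ := mem_support_iff_exists_getVert.mp hx
  obtain ⟨my, rfl, hmy⟩ := mem_support_iff_exists_getVert.mp hy
  have hex : ∃ m, c.getVert m ∈ S := ⟨mx, hxS⟩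
  set i := Nat.find hex
  set j := Nat.findGreatest (fun m => c.getVert m ∈ S) c.length
  have hiS : c.getVert i ∈ S := Nat.find_spec hex
  have hjS : c.getVert j ∈ S := Nat.findGreatest_spec (P := fun m => c.getVert m ∈ S) hmx hxS
  have hi0 : i ≠ 0 := fun h => hv (c.getVert_zero ▸ h ▸ hiS)
  have hjn : j ≠ c.length := fun h => hv (c.getVert_length ▸ h ▸ hjS)
  have hjl : j ≤ c.length := Nat.findGreatest_le _
  have hix : i ≤ mx := Nat.find_min' hex hxS
  have hiy : i ≤ my := Nat.find_min' hex hyS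
  have hxj : mx ≤ j := Nat.le_findGreatest hmx hxS
  have hyj : my ≤ j := Nat.le_findGreatest hmy hyS
  have hvD₁ : v ∈ (c.segment 0 (i - 1)).verts := by
    simpa using c.getVert_mem_segment (m := 0) le_rfl (Nat.zero_le (i - 1))
  have hvD₂ : v ∈ (c.segment (j + 1) c.length).verts := by
    simpa using c.getVert_mem_segment (m := c.length) (by omega : j + 1 ≤ c.length) le_rfl
  refine ⟨c.getVert i, c.getVert j, ?_, hiS, hjS, c.getVert_mem_support i, c.getVert_mem_support j,
    c.segment 0 (i - 1) ⊔ c.segment (j + 1) c.length, Subgraph.connected_sup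
      (c.segment_connected _ _).preconnected (c.segment_connected _ _).preconnected ⟨v, hvD₁, hvD₂⟩,
    Or.inl hvD₁, ?_, ?_, ?_⟩
  · intro h
    have := hc.getVert_injOn' (show i ≤ c.length - 1 by omega) (show j ≤ c.length - 1 by omega) h
    exact hxy (congrArg c.getVert (by omega))
  · rintro w (hw | hw)
    · obtain ⟨m, -, hm, rfl⟩ := (mem_segment_verts (Nat.zero_le _) (by omega)).mp hw
      exact Nat.find_min hex (by omega)
    · obtain ⟨m, hm, hml, rfl⟩ := (mem_segment_verts (by omega) le_rfl).mp hw
      exact Nat.findGreatest_is_greatest (P := fun m => c.getVert m ∈ S) (by omega) hml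
  · refine ⟨_, Or.inl (c.getVert_mem_segment (Nat.zero_le _) le_rfl), ?_⟩
    have := c.adj_getVert_succ (by omega : i - 1 < c.length)
    rw [Nat.sub_add_cancel (by omega)] at this
    exact this.symm
  · exact ⟨_, Or.inr (c.getVert_mem_segment le_rfl (by omega)), c.adj_getVert_succ (by omega)⟩

end Walk

end SimpleGraph

theorem stmt19_general {V : Type*} (H : SimpleGraph V)
    (a a' u v : V) (C : H.Walk a a) (C' : H.Walk a' a')
    (hC : C.IsCycle) (hC' : C'.IsCycle) (hshare : ∃ e, e ∈ C.edges ∧ e ∈ C'.edges)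
    (P : H.Walk u v) (hP : P.IsPath) (huv : u ≠ v)
    (huC' : u ∉ C'.support) (hvC : v ∉ C.support)
    (hPC : ∀ w ∈ P.support, w ∈ C.support ↔ w = u)
    (hPC' : ∀ w ∈ P.support, w ∈ C'.support ↔ w = v) :
    HasK4Minor H := by
  classical
  obtain ⟨e, heC, heC'⟩ := hshare
  induction e using Sym2.ind with | _ x y => ?_
  have hu : u ∈ C.support := (hPC u P.start_mem_support).mpr rfl
  have hv : v ∈ C'.support := (hPC' v P.end_mem_support).mpr rfl
  obtain ⟨p, q, hpq, hpC, hqC, hpC', hqC', D, hD, hvD, hDC, hDp, hDq⟩ :=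
    (hC'.rotate hv).exists_arc_avoiding (S := {w | w ∈ C.support}) hvC
      ((C'.mem_support_rotate_iff v hv).mpr (C'.fst_mem_support_of_mem_edges heC'))
      ((C'.mem_support_rotate_iff v hv).mpr (C'.snd_mem_support_of_mem_edges heC'))
      (C.fst_mem_support_of_mem_edges heC) (C.snd_mem_support_of_mem_edges heC)
      (C.adj_of_mem_edges heC).ne
  rw [Walk.mem_support_rotate_iff] at hpC' hqC'
  have hlen : 0 < P.length := Nat.pos_of_ne_zero fun h => huv (P.eq_of_length_eq_zero h)
  have hPD : ∀ w ∈ (P.segment 1 P.length).verts, w ∉ C.support := fun w hw hwC =>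
    hP.start_notMem_segment hlen (((hPC w (P.segment_verts_subset_support _ _ hw)).mp hwC) ▸ hw)
  have hvP : v ∈ (P.segment 1 P.length).verts := by
    simpa using P.getVert_mem_segment (m := P.length) hlen le_rfl
  refine hC.hasK4Minor_s19 hu hpC hqC (fun h => huC' (h ▸ hpC')) (fun h => huC' (h ▸ hqC')) hpq
    (Subgraph.connected_sup (P.segment_connected _ _).preconnected hD.preconnected ⟨v, hvP, hvD⟩)
    ?_ ⟨_, Or.inl (P.getVert_mem_segment le_rfl hlen), by simpa using P.adj_getVert_succ hlen⟩
    (hDp.imp fun _ h => ⟨Or.inr h.1, h.2⟩) (hDq.imp fun _ h => ⟨Or.inr h.1, h.2⟩)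
  rintro w (hw | hw)
  exacts [hPD w hw, hDC w hw]

theorem stmt19 {V : Type*} (H : SimpleGraph V) (hconn : H.Connected)
    (a a' u v : V) (C : H.Walk a a) (C' : H.Walk a' a')
    (hC : C.IsCycle) (hC' : C'.IsCycle) (hshare : ∃ e, e ∈ C.edges ∧ e ∈ C'.edges)
    (P : H.Walk u v) (hP : P.IsPath) (huv : u ≠ v)
    (huC' : u ∉ C'.support) (hvC : v ∉ C.support)
    (hPC : ∀ w ∈ P.support, w ∈ C.support ↔ w = u)
    (hPC' : ∀ w ∈ P.support, w ∈ C'.support ↔ w = v) :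
    HasK4Minor H :=
  stmt19_general H a a' u v C C' hC hC' hshare P hP huv huC' hvC hPC hPC'
end
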